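/- arXiv:2604.07330 — 10 statements merged into one kernel-verified Lean document; each statement's English description precedes it below -/
import Mathlib

section
/- The unfolded Laurent polynomial G is invariant under σ: σ(G) = G. -/
/-- The additive monoid homomorphism `e_l` sending an exponent vector
`u : Fin n →₀ ℤ` to `Σ_i u_i · δ_{(i, l mod d_i)}`. -/
noncomputable def unfoldExp (n : ℕ) (d : Fin n → ℕ) (l : ℕ) :
    (Fin n →₀ ℤ) →+ ((Σ i : Fin n, ZMod (d i)) →₀ ℤ) :=
  Finsupp.mapDomain.addMonoidHom fun i => (⟨i, (l : ZMod (d i))⟩ : Σ i : Fin n, ZMod (d i))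

/-!
The shift `π` moves the exponent vector `e_l u` to `e_{l+1} u`, so `σ` maps the `l`-th summand
of `G` to the `(l+1)`-th. Since every `d_i` divides `d`, `e_d = e_0`, and shifting the summation
index by one permutes the summands cyclically.
-/

open Finset

theorem Finset.sum_range_succ_comp_eq_of_eq {M : Type*} [AddCancelCommMonoid M] {g : ℕ → M}
    {N : ℕ} (h : g N = g 0) : ∑ l ∈ range N, g (l + 1) = ∑ l ∈ range N, g l :=
  add_right_cancel (b := g 0) <| by rw [← sum_range_succ', sum_range_succ, h]

theorem mapDomain_shift_comp_unfoldExp (n : ℕ) (d : Fin n → ℕ) (l : ℕ) :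
    Finsupp.mapDomain (fun y : Σ i : Fin n, ZMod (d i) => (⟨y.1, y.2 + 1⟩ : Σ i, ZMod (d i))) ∘
      unfoldExp n d l = unfoldExp n d (l + 1) := by
  funext u
  simp only [Function.comp_apply, unfoldExp, Finsupp.mapDomain.addMonoidHom_apply,
    ← Finsupp.mapDomain_comp]
  congr 1
  funext i
  simp only [Function.comp_apply, Nat.cast_succ]

theorem unfoldExp_periodic (n : ℕ) (d : Fin n → ℕ) :
    Function.Periodic (unfoldExp n d) (univ.lcm d) := by
  intro l
  have hlcm (i : Fin n) : ((univ.lcm d : ℕ) : ZMod (d i)) = 0 :=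
    (ZMod.natCast_eq_zero_iff _ _).2 (dvd_lcm (mem_univ i))
  simp only [unfoldExp, Nat.cast_add, hlcm, add_zero]

theorem unfolded_shift_invariant_general (n : ℕ) (d : Fin n → ℕ)
    (R : Type*) [CommRing R] (f : AddMonoidAlgebra R (Fin n →₀ ℤ)) :
    Finsupp.mapDomain
        (fun v : (Σ i : Fin n, ZMod (d i)) →₀ ℤ =>
          Finsupp.mapDomain (fun y : Σ i : Fin n, ZMod (d i) => (⟨y.1, y.2 + 1⟩ : Σ i : Fin n, ZMod (d i))) v)
        (∑ l ∈ Finset.range (Finset.univ.lcm d), Finsupp.mapDomain (unfoldExp n d l) f.coeff) =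
      ∑ l ∈ Finset.range (Finset.univ.lcm d), Finsupp.mapDomain (unfoldExp n d l) f.coeff := by
  have hsummand (l : ℕ) : Finsupp.mapDomain
      (Finsupp.mapDomain fun y : Σ i : Fin n, ZMod (d i) => (⟨y.1, y.2 + 1⟩ : Σ i, ZMod (d i)))
      (Finsupp.mapDomain (unfoldExp n d l) f.coeff) =
      Finsupp.mapDomain (unfoldExp n d (l + 1)) f.coeff := by
    rw [← Finsupp.mapDomain_comp, mapDomain_shift_comp_unfoldExp]
  rw [Finsupp.mapDomain_finsetSum]
  simp only [hsummand]
  exact sum_range_succ_comp_eq_of_eq (g := fun l => Finsupp.mapDomain (unfoldExp n d l) f.coeff)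
    (by rw [(unfoldExp_periodic n d).eq])

/-- **Invariance of the unfolded Laurent polynomial under the shift `σ`.**
For a Laurent polynomial `f` in `n` variables over a commutative ring `R`, the unfolded
polynomial `G = Σ_{l=0}^{d-1} mapDomain(e_l)(f)` in the variables indexed by
`Y = Σ i, ZMod (d i)` satisfies `σ G = G`, where `σ` is induced by mapping each exponent
vector `v` to `mapDomain π v` for the shift `π (i, j) = (i, j + 1)`. -/
theorem unfolded_shift_invariant (n : ℕ) (hn : 1 ≤ n) (d : Fin n → ℕ) (hd : ∀ i, 0 < d i)
    (R : Type*) [CommRing R] (f : AddMonoidAlgebra R (Fin n →₀ ℤ)) :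
    Finsupp.mapDomain
        (fun v : (Σ i : Fin n, ZMod (d i)) →₀ ℤ =>
          Finsupp.mapDomain (fun y : Σ i : Fin n, ZMod (d i) => (⟨y.1, y.2 + 1⟩ : Σ i : Fin n, ZMod (d i))) v)
        (∑ l ∈ Finset.range (Finset.univ.lcm d), Finsupp.mapDomain (unfoldExp n d l) f.coeff) =
      ∑ l ∈ Finset.range (Finset.univ.lcm d), Finsupp.mapDomain (unfoldExp n d l) f.coeff :=
  unfolded_shift_invariant_general n d R f
end

section
/- Let k ≥ 1, let v_1, …, v_k be elements of Δ, let i_1, …, i_k be natural numbers, let θ : ℕ → K satisfy ‖θ_i‖ ≤ ρ^i for all i, and let c_1, …, c_k ∈ K satisfy ‖c_m‖ ≤ 1. Then ‖∏_{m=1}^k θ_{i_m} · c_m^{i_m}‖ ≤ ρ^{w(Σ_{m=1}^k i_m • v_m)}. -/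
/-! Each factor has norm at most `ρ ^ i_m`, so the product has norm at most `ρ ^ N` with
`N = ∑ i_m`. On the other hand `∑ i_m • v_m` is `N` times a convex combination of the `v_m`,
hence lies in `N • Δ`, so its gauge is at most `N`; as `ρ ≤ 1`, `t ↦ ρ ^ t` is antitone. -/

open Finset

theorem gauge_sum_smul_le_sum {α E : Type*} [AddCommGroup E] [Module ℝ E] {s : Set E}
    (hs : Convex ℝ s) {t : Finset α} {w : α → ℝ} {z : α → E}
    (hw : ∀ i ∈ t, 0 ≤ w i) (hz : ∀ i ∈ t, z i ∈ s) :
    gauge s (∑ i ∈ t, w i • z i) ≤ ∑ i ∈ t, w i := by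
  rcases (sum_nonneg hw).eq_or_lt with hsum | hsum
  · have hw0 : ∀ i ∈ t, w i = 0 := (sum_eq_zero_iff_of_nonneg hw).mp hsum.symm
    rw [← hsum, sum_eq_zero fun i hi => by rw [hw0 i hi, zero_smul], gauge_zero]
  · exact gauge_le_of_mem hsum.le
      ⟨t.centerMass w z, hs.centerMass_mem hw hsum hz, smul_inv_smul₀ hsum.ne' _⟩

theorem norm_prod_mul_pow_le_pow_sum {α R : Type*} [SeminormedCommRing R] [NormMulClass R]
    [NormOneClass R] (s : Finset α) {θ : ℕ → R} {c : α → R} (n : α → ℕ) {ρ : ℝ}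
    (hθ : ∀ i, ‖θ i‖ ≤ ρ ^ i) (hc : ∀ m ∈ s, ‖c m‖ ≤ 1) :
    ‖∏ m ∈ s, θ (n m) * c m ^ n m‖ ≤ ρ ^ ∑ m ∈ s, n m := by
  rw [norm_prod, ← prod_pow_eq_pow_sum]
  refine prod_le_prod (fun m _ => norm_nonneg _) fun m hm => ?_
  calc ‖θ (n m) * c m ^ n m‖ = ‖θ (n m)‖ * ‖c m‖ ^ n m := by rw [norm_mul, norm_pow]
    _ ≤ ‖θ (n m)‖ :=
        mul_le_of_le_one_right (norm_nonneg _) (pow_le_one₀ (norm_nonneg _) (hc m hm))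
    _ ≤ ρ ^ n m := hθ _

theorem norm_prod_theta_le_rpow_gauge_general
    {ι : Type*} (Δ : Set (ι → ℝ)) (hconv : Convex ℝ Δ)
    {K : Type*} [NormedField K]
    (ρ : ℝ) (hρ0 : 0 < ρ) (hρ1 : ρ ≤ 1)
    (k : ℕ) (v : Fin k → ι → ℝ) (hv : ∀ m, v m ∈ Δ)
    (idx : Fin k → ℕ) (θ : ℕ → K) (hθ : ∀ i, ‖θ i‖ ≤ ρ ^ i)
    (c : Fin k → K) (hc : ∀ m, ‖c m‖ ≤ 1) :
    ‖∏ m, θ (idx m) * c m ^ idx m‖ ≤ ρ ^ gauge Δ (∑ m, (idx m : ℝ) • v m) := by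
  have hgauge : gauge Δ (∑ m, (idx m : ℝ) • v m) ≤ ∑ m, (idx m : ℝ) :=
    gauge_sum_smul_le_sum hconv (fun m _ => Nat.cast_nonneg _) fun m _ => hv m
  calc ‖∏ m, θ (idx m) * c m ^ idx m‖ ≤ ρ ^ ∑ m, idx m :=
        norm_prod_mul_pow_le_pow_sum _ idx hθ fun m _ => hc m
    _ = ρ ^ ∑ m, (idx m : ℝ) := by rw [← Nat.cast_sum, Real.rpow_natCast]
    _ ≤ ρ ^ gauge Δ (∑ m, (idx m : ℝ) • v m) :=
        Real.rpow_le_rpow_of_exponent_ge hρ0 hρ1 hgauge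

/-- **Core estimate for the coefficients of Dwork's splitting series.**
Let `Δ ⊆ ι → ℝ` be convex with `0 ∈ Δ` and `w = gauge Δ` the associated weight.
If `‖θ_i‖ ≤ ρ^i`, `‖c_m‖ ≤ 1` and `v_1, …, v_k ∈ Δ`, then
`‖∏_{m=1}^k θ_{i_m} c_m^{i_m}‖ ≤ ρ^{w(Σ_m i_m • v_m)}` for a field `K` with a
multiplicative nonarchimedean norm and `0 < ρ ≤ 1`. -/
theorem norm_prod_theta_le_rpow_gauge
    {ι : Type*} [Fintype ι] (Δ : Set (ι → ℝ)) (hconv : Convex ℝ Δ)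
    (h0 : (0 : ι → ℝ) ∈ Δ)
    {K : Type*} [NormedField K] (hna : IsNonarchimedean (fun x : K => ‖x‖))
    (ρ : ℝ) (hρ0 : 0 < ρ) (hρ1 : ρ ≤ 1)
    (k : ℕ) (hk : 1 ≤ k) (v : Fin k → ι → ℝ) (hv : ∀ m, v m ∈ Δ)
    (idx : Fin k → ℕ) (θ : ℕ → K) (hθ : ∀ i, ‖θ i‖ ≤ ρ ^ i)
    (c : Fin k → K) (hc : ∀ m, ‖c m‖ ≤ 1) :
    ‖∏ m, θ (idx m) * c m ^ idx m‖ ≤ ρ ^ gauge Δ (∑ m, (idx m : ℝ) • v m) :=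
  norm_prod_theta_le_rpow_gauge_general Δ hconv ρ hρ0 hρ1 k v hv idx θ hθ c hc
end

section
/- Let k ≥ 1 and let b be an integer coprime to d. The map ρ sending y ∈ W_k^{(b)} to (y(1,0), …, y(n,0)) is a bijection from W_k^{(b)} onto the product over i = 1, …, n of the groups { x ∈ Kˣ : x^{q^{k d_i} − 1} = 1 } (the unit groups of the subfields of K with q^{k d_i} elements). -/
/-!
Writing `Q = q^k`, the defining relation says that raising to the `Q`-th power moves a point
`y(i, j)` to `y(i, j + b)`; iterating, `y(i, j)^{Q^m} = y(i, j + m b)`. Since `b` is a unit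
modulo every `dᵢ`, every `j` is of the form `m b`, so `y` is determined by the values `y(i, 0)`,
and these satisfy `y(i, 0)^{Q^{dᵢ}} = y(i, 0)`. Conversely, a point `x` with `x^{Q^{dᵢ}} = x`
defines `y(i, j) = x^{Q^m}` for any `m` with `m b = j` in `ℤ/dᵢ`, independently of the choice
of `m`.
-/

/-- The twisted fixed point set `W_k^{(b)} = { y : Y → Kˣ | y(i,j)^{q^k} = y(i, j+b) }`,
where `K` is an algebraic closure of `𝔽_p` and `q = p^a`. -/
def twistedFixedPoints (p a : ℕ) [Fact p.Prime] (n : ℕ) (d : Fin n → ℕ) (k : ℕ) (b : ℤ) :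
    Set ((Σ i : Fin n, ZMod (d i)) → (AlgebraicClosure (ZMod p))ˣ) :=
  {y | ∀ (i : Fin n) (j : ZMod (d i)),
    y ⟨i, j⟩ ^ (p ^ a) ^ k = y ⟨i, j + (b : ZMod (d i))⟩}

open Function Set

theorem Set.BijOn.piMap {ι : Type*} {α β : ι → Type*} {f : ∀ i, α i → β i}
    {s : ∀ i, Set (α i)} {t : ∀ i, Set (β i)} (h : ∀ i, BijOn (f i) (s i) (t i)) :
    BijOn (Pi.map f) (univ.pi s) (univ.pi t) := by
  refine ⟨piMap_mapsTo_pi fun i _ => (h i).mapsTo, fun x hx y hy hxy => ?_, ?_⟩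
  · exact funext fun i => (h i).injOn (hx i trivial) (hy i trivial) (congrFun hxy i)
  · rw [SurjOn, piMap_image_univ_pi]
    exact pi_mono fun i _ => (h i).surjOn

theorem Function.IsPeriodicPt.iterate_eq_of_natCast_eq {α : Type*} {f : α → α} {N : ℕ} {x : α}
    (hx : IsPeriodicPt f N x) {m m' : ℕ} (h : (m : ZMod N) = m') : f^[m] x = f^[m'] x := by
  rw [← hx.iterate_mod_apply m, ← hx.iterate_mod_apply m',
    (ZMod.natCast_eq_natCast_iff' m m' N).1 h]

theorem isPeriodicPt_pow_iff {G : Type*} [Group G] {Q : ℕ} (hQ : 0 < Q) (N : ℕ) (x : G) :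
    IsPeriodicPt (· ^ Q) N x ↔ x ^ (Q ^ N - 1) = 1 := by
  obtain ⟨m, hm⟩ := Nat.exists_eq_add_of_le' (Nat.one_le_pow N Q hQ)
  rw [IsPeriodicPt, IsFixedPt, pow_iterate]
  beta_reduce
  rw [hm, pow_succ, mul_eq_right, Nat.add_sub_cancel]

section TwistedOrbits

variable {α : Type*} (f : α → α) {N : ℕ} {β : ZMod N}

theorem iterate_apply_eq_of_apply_eq_add {y : ZMod N → α} (hy : ∀ j, f (y j) = y (j + β))
    (m : ℕ) (j : ZMod N) : f^[m] (y j) = y (j + m * β) := by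
  induction m with
  | zero => simp
  | succ m ih =>
    rw [iterate_succ_apply', ih, hy]
    congr 1
    push_cast
    ring

theorem bijOn_eval_zero_of_apply_eq_add [NeZero N] (hβ : IsUnit β) :
    BijOn (fun y : ZMod N → α => y 0) {y | ∀ j, f (y j) = y (j + β)}
      {x | IsPeriodicPt f N x} := by
  obtain ⟨γ, hγ⟩ := hβ.exists_right_inv
  have hcoord (j : ZMod N) : j = 0 + ((j * γ).val : ZMod N) * β := by
    rw [ZMod.natCast_zmod_val, zero_add, mul_assoc, mul_comm γ, hγ, mul_one]
  refine ⟨fun y hy => ?_, fun y hy y' hy' h0 => funext fun j => ?_, fun x hx => ?_⟩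
  · simpa [IsPeriodicPt, IsFixedPt] using iterate_apply_eq_of_apply_eq_add f hy N 0
  · rw [hcoord j, ← iterate_apply_eq_of_apply_eq_add f hy,
      ← iterate_apply_eq_of_apply_eq_add f hy', show y 0 = y' 0 from h0]
  · refine ⟨fun j => f^[(j * γ).val] x, fun j => ?_, by simp⟩
    rw [← iterate_succ_apply' f]
    apply hx.iterate_eq_of_natCast_eq
    push_cast
    rw [ZMod.natCast_zmod_val, ZMod.natCast_zmod_val, add_mul, hγ]

theorem bijOn_sigma_eval_zero_of_apply_eq_add {ι : Type*} {N : ι → ℕ} [∀ i, NeZero (N i)]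
    {β : ∀ i, ZMod (N i)} (hβ : ∀ i, IsUnit (β i)) :
    BijOn (fun (y : (Σ i, ZMod (N i)) → α) i => y ⟨i, 0⟩)
      {y | ∀ i j, f (y ⟨i, j⟩) = y ⟨i, j + β i⟩} {x | ∀ i, IsPeriodicPt f (N i) (x i)} := by
  convert (BijOn.piMap fun i => bijOn_eval_zero_of_apply_eq_add f (hβ i)).comp
    (Equiv.piCurry fun _ _ => α).bijective.bijOn_preimage using 1 <;> ext <;> simp [Sigma.curry]

end TwistedOrbits

theorem twistedFixedPoints_proj_bijOn_general (p a : ℕ) [Fact p.Prime]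
    (n : ℕ) (d : Fin n → ℕ) (hd : ∀ i, 0 < d i)
    (k : ℕ) (b : ℤ) (hb : IsCoprime b ((Finset.univ.lcm d : ℕ) : ℤ)) :
    Set.BijOn
      (fun (y : (Σ i : Fin n, ZMod (d i)) → (AlgebraicClosure (ZMod p))ˣ)
          (i : Fin n) => y ⟨i, 0⟩)
      (twistedFixedPoints p a n d k b)
      {x : Fin n → (AlgebraicClosure (ZMod p))ˣ |
        ∀ i, x i ^ ((p ^ a) ^ (k * d i) - 1) = 1} := by
  have (i : Fin n) : NeZero (d i) := ⟨(hd i).ne'⟩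
  have hunit (i : Fin n) : IsUnit (b : ZMod (d i)) :=
    (ZMod.coe_int_isUnit_iff_isCoprime b (d i)).2 <| IsCoprime.symm <|
      hb.of_isCoprime_of_dvd_right <| Int.natCast_dvd_natCast.2 <|
        Finset.dvd_lcm (Finset.mem_univ i)
  have hQ : 0 < (p ^ a) ^ k := pow_pos (pow_pos (Fact.out : p.Prime).pos a) k
  simp only [pow_mul, ← isPeriodicPt_pow_iff hQ]
  exact bijOn_sigma_eval_zero_of_apply_eq_add (· ^ (p ^ a) ^ k) hunit

/-- **The projection onto the zero-th coordinates is a bijection** from `W_k^{(b)}` onto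
the product over `i = 1, …, n` of the unit groups of the subfields of `K` with
`q^{k dᵢ}` elements, i.e. onto `{ x : Fin n → Kˣ | ∀ i, x i ^ (q^{k dᵢ} − 1) = 1 }`,
provided `gcd(b, d) = 1` where `d = lcm(d₁, …, dₙ)`. -/
theorem twistedFixedPoints_proj_bijOn (p a : ℕ) [Fact p.Prime] (ha : 1 ≤ a)
    (n : ℕ) (hn : 1 ≤ n) (d : Fin n → ℕ) (hd : ∀ i, 0 < d i)
    (k : ℕ) (hk : 1 ≤ k) (b : ℤ) (hb : IsCoprime b ((Finset.univ.lcm d : ℕ) : ℤ)) :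
    Set.BijOn
      (fun (y : (Σ i : Fin n, ZMod (d i)) → (AlgebraicClosure (ZMod p))ˣ)
          (i : Fin n) => y ⟨i, 0⟩)
      (twistedFixedPoints p a n d k b)
      {x : Fin n → (AlgebraicClosure (ZMod p))ˣ |
        ∀ i, x i ^ ((p ^ a) ^ (k * d i) - 1) = 1} :=
  twistedFixedPoints_proj_bijOn_general p a n d hd k b hb
end

section
/- Let k ≥ 1 and let b be an integer coprime to d. For every y ∈ W_k^{(b)}, Σ_{l=0}^{d−1} f(y_{(l)}) = Σ_{m=0}^{d−1} f(ρ(y))^{q^{km}}, where y_{(l)} : Fin n → Kˣ is given by y_{(l)}(i) = y(i, l mod d_i) and ρ(y) : Fin n → Kˣ is given by ρ(y)(i) = y(i, 0). (That is, the value of the unfolded polynomial G at a fixed point y equals the relative trace Tr_{𝔽_{q^{kd}}/𝔽_{q^k}}(f(ρ(y))).) -/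
/-- The value `f(x) = Σ_{u ∈ S} c_u ∏ᵢ xᵢ^{uᵢ}` of a Laurent polynomial with support `S`
and coefficients `c`, at a point `x` of the torus `(Kˣ)ⁿ` (integer powers taken in `Kˣ`). -/
noncomputable def laurentVal (p : ℕ) [Fact p.Prime] (n : ℕ) (S : Finset (Fin n → ℤ))
    (c : (Fin n → ℤ) → AlgebraicClosure (ZMod p))
    (x : Fin n → (AlgebraicClosure (ZMod p))ˣ) : AlgebraicClosure (ZMod p) :=
  ∑ u ∈ S, c u * ((∏ i, x i ^ u i : (AlgebraicClosure (ZMod p))ˣ) : AlgebraicClosure (ZMod p))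

section Reindexing

variable {M : Type*} [AddCommMonoid M]

theorem ZMod.sum_range_natCast_eq_sum_univ (N : ℕ) [NeZero N] (H : ZMod N → M) :
    ∑ l ∈ Finset.range N, H l = ∑ z : ZMod N, H z :=
  Finset.sum_nbij' (fun l => (l : ZMod N)) ZMod.val (fun _ _ => Finset.mem_univ _)
    (fun z _ => Finset.mem_range.mpr z.val_lt)
    (fun _ hl => ZMod.val_cast_of_lt (Finset.mem_range.mp hl))
    (fun z _ => ZMod.natCast_zmod_val z) (fun _ _ => rfl)

theorem ZMod.sum_range_comp_natCast_mul_unit (N : ℕ) (H : ZMod N → M) (u : (ZMod N)ˣ) :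
    ∑ m ∈ Finset.range N, H (m * u) = ∑ m ∈ Finset.range N, H m := by
  rcases N.eq_zero_or_pos with rfl | hN
  · simp
  have : NeZero N := ⟨hN.ne'⟩
  rw [ZMod.sum_range_natCast_eq_sum_univ N (fun z => H (z * u)),
    ZMod.sum_range_natCast_eq_sum_univ N H]
  exact Equiv.sum_comp (Units.mulRight u) H

end Reindexing

theorem laurentVal_pow_char_pow (p : ℕ) [Fact p.Prime] (n : ℕ) (S : Finset (Fin n → ℤ))
    (c : (Fin n → ℤ) → AlgebraicClosure (ZMod p)) (N : ℕ) (hc : ∀ u ∈ S, c u ^ p ^ N = c u)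
    (x : Fin n → (AlgebraicClosure (ZMod p))ˣ) :
    laurentVal p n S c x ^ p ^ N = laurentVal p n S c (fun i => x i ^ p ^ N) := by
  rw [laurentVal, ← iterateFrobenius_def (p := p), map_sum]
  refine Finset.sum_congr rfl fun u hu => ?_
  rw [map_mul, iterateFrobenius_def, iterateFrobenius_def, hc u hu, ← Units.val_pow_eq_pow_val,
    ← Finset.prod_pow]
  simp only [← zpow_natCast, ← zpow_mul, mul_comm]

theorem pow_pow_mul_eq_of_mem_twistedFixedPoints {p a : ℕ} [Fact p.Prime] {n : ℕ}
    {d : Fin n → ℕ} {k : ℕ} {b : ℤ} {y : (Σ i : Fin n, ZMod (d i)) → (AlgebraicClosure (ZMod p))ˣ}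
    (hy : y ∈ twistedFixedPoints p a n d k b) (m : ℕ) (i : Fin n) (j : ZMod (d i)) :
    y ⟨i, j⟩ ^ (p ^ a) ^ (k * m) = y ⟨i, j + ((m * b : ℤ) : ZMod (d i))⟩ := by
  induction m with
  | zero => simp
  | succ m ih =>
    rw [mul_add_one, pow_add, pow_mul, ih, hy]
    congr 2
    push_cast
    ring

theorem unfolded_eval_eq_relative_trace_general (p a : ℕ) [Fact p.Prime]
    (n : ℕ) (d : Fin n → ℕ)
    (k : ℕ) (b : ℤ) (hb : IsCoprime b ((Finset.univ.lcm d : ℕ) : ℤ))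
    (S : Finset (Fin n → ℤ)) (c : (Fin n → ℤ) → AlgebraicClosure (ZMod p))
    (hc : ∀ u ∈ S, c u ^ (p ^ a) = c u)
    (y : (Σ i : Fin n, ZMod (d i)) → (AlgebraicClosure (ZMod p))ˣ)
    (hy : y ∈ twistedFixedPoints p a n d k b) :
    ∑ l ∈ Finset.range (Finset.univ.lcm d),
        laurentVal p n S c (fun i => y ⟨i, (l : ZMod (d i))⟩) =
      ∑ m ∈ Finset.range (Finset.univ.lcm d),
        (laurentVal p n S c (fun i => y ⟨i, 0⟩)) ^ (p ^ a) ^ (k * m) := by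
  set N := Finset.univ.lcm d
  have hdvd (i : Fin n) : d i ∣ N := Finset.dvd_lcm (Finset.mem_univ i)
  let G (z : ZMod N) : AlgebraicClosure (ZMod p) :=
    laurentVal p n S c (fun i => y ⟨i, ZMod.castHom (hdvd i) (ZMod (d i)) z⟩)
  have hc_iter (m : ℕ) (u : Fin n → ℤ) (hu : u ∈ S) : c u ^ p ^ (a * (k * m)) = c u := by
    rw [pow_mul, ← congrFun (pow_iterate (p ^ a) (k * m)) (c u)]
    exact Function.iterate_fixed (hc u hu) _
  have hterm (m : ℕ) : laurentVal p n S c (fun i => y ⟨i, 0⟩) ^ (p ^ a) ^ (k * m) =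
      G (m * (ZMod.unitOfIsCoprime b hb : ZMod N)) := by
    rw [← pow_mul, laurentVal_pow_char_pow p n S c _ (hc_iter m)]
    simp only [G, pow_mul p a, pow_pow_mul_eq_of_mem_twistedFixedPoints hy, zero_add,
      ZMod.coe_unitOfIsCoprime, map_mul, map_natCast, map_intCast, Int.cast_mul, Int.cast_natCast]
  simp only [hterm, ZMod.sum_range_comp_natCast_mul_unit N G]
  simp only [G, map_natCast]

/-- **The unfolded polynomial evaluated at a twisted fixed point is a relative trace:**
for `y ∈ W_k^{(b)}` with `gcd(b, d) = 1`,
`Σ_{l=0}^{d−1} f(y_{(l)}) = Σ_{m=0}^{d−1} f(ρ(y))^{q^{km}}`, where `y_{(l)}(i) = y(i, l mod dᵢ)`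
and `ρ(y)(i) = y(i, 0)`. -/
theorem unfolded_eval_eq_relative_trace (p a : ℕ) [Fact p.Prime] (ha : 1 ≤ a)
    (n : ℕ) (hn : 1 ≤ n) (d : Fin n → ℕ) (hd : ∀ i, 0 < d i)
    (k : ℕ) (hk : 1 ≤ k) (b : ℤ) (hb : IsCoprime b ((Finset.univ.lcm d : ℕ) : ℤ))
    (S : Finset (Fin n → ℤ)) (c : (Fin n → ℤ) → AlgebraicClosure (ZMod p))
    (hc : ∀ u ∈ S, c u ^ (p ^ a) = c u)
    (y : (Σ i : Fin n, ZMod (d i)) → (AlgebraicClosure (ZMod p))ˣ)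
    (hy : y ∈ twistedFixedPoints p a n d k b) :
    ∑ l ∈ Finset.range (Finset.univ.lcm d),
        laurentVal p n S c (fun i => y ⟨i, (l : ZMod (d i))⟩) =
      ∑ m ∈ Finset.range (Finset.univ.lcm d),
        (laurentVal p n S c (fun i => y ⟨i, 0⟩)) ^ (p ^ a) ^ (k * m) :=
  unfolded_eval_eq_relative_trace_general p a n d k b hb S c hc y hy
end

section
/- Let k ≥ 1, let b be an integer coprime to d, and let u : Y → ℤ. Then Σ_{y ∈ W_k^{(b)}} ∏_{(i,j) ∈ Y} y(i,j)^{u(i,j)} (an element of K, the integer powers taken in Kˣ) equals the image in K of the natural number ∏_{i=1}^n (q^{k d_i} − 1) if there exists v : Y → ℤ such that u(i,j) = q^k · v(i, j + b) − v(i, j) for all (i, j) ∈ Y, and equals 0 otherwise. -/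
/-!
Since `b` is a unit modulo each `dᵢ`, translation by `b` is a single cycle on `ZMod dᵢ`, so a
point `y` of `W` is determined by the values `y(i, 0)`, and these range independently over the
`Nᵢ`-th roots of unity, `Nᵢ = q^{k dᵢ} - 1`. At such a point the character equals
`∏ᵢ y(i, 0) ^ eᵢ` with `eᵢ = ∑_{t < dᵢ} q^{kt} u(i, tb)`, so orthogonality on the cyclic groups
`μ_{Nᵢ}` turns the sum into `∏ᵢ [Nᵢ ∣ eᵢ] Nᵢ`. It remains to see that `u` is a twisted coboundary
iff `Nᵢ ∣ eᵢ` for all `i`. On one cycle `ZMod D`, with `Q = q^k`, the rotated sums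
`S(j) = ∑_{t < D} Q^t u(j + tb)` satisfy `Q S(j + b) - S(j) = (Q^D - 1) u(j)`; as `Q` is prime to
`Q^D - 1`, divisibility of `S(0)` by `Q^D - 1` propagates along the cycle, and then
`S / (Q^D - 1)` is a primitive.
-/

open Finset

lemma pow_eq_self_iff_pow_pred_eq_one {G : Type*} [Group G] {g : G} {n : ℕ} (hn : n ≠ 0) :
    g ^ n = g ↔ g ^ (n - 1) = 1 := by
  conv_lhs => rw [← Nat.sub_add_cancel (Nat.one_le_iff_ne_zero.mpr hn), pow_succ, mul_eq_right]

lemma pow_pow_mod_eq {M : Type*} [Monoid M] {g : M} {Q D : ℕ} (hg : g ^ Q ^ D = g) (m : ℕ) :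
    g ^ Q ^ (m % D) = g ^ Q ^ m := by
  have hmul (c : ℕ) : g ^ Q ^ (D * c) = g := by
    induction c with
    | zero => simp
    | succ c ih => rw [Nat.mul_succ, pow_add, pow_mul, ih, hg]
  rw [← Nat.mod_add_div m D, Nat.add_mul_mod_self_left, Nat.mod_mod, pow_add, mul_comm, pow_mul,
    hmul]

lemma zpow_finset_sum {G ι : Type*} [CommGroup G] (g : G) (s : Finset ι) (f : ι → ℤ) :
    g ^ (∑ i ∈ s, f i) = ∏ i ∈ s, g ^ f i := by
  classical
  induction s using Finset.induction with
  | empty => simp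
  | insert _ _ h ih => rw [sum_insert h, prod_insert h, zpow_add, ih]

lemma CharP.natCast_pow_sub_one {R : Type*} [Ring R] (p : ℕ) [CharP R p] (hp : p ≠ 0) {m : ℕ}
    (hm : m ≠ 0) : ((p ^ m - 1 : ℕ) : R) = -1 := by
  rw [Nat.cast_sub (Nat.one_le_pow _ _ (Nat.pos_of_ne_zero hp)), Nat.cast_pow, CharP.cast_eq_zero,
    zero_pow hm, Nat.cast_one, zero_sub]

lemma sum_rootsOfUnity_zpow {R : Type*} [CommRing R] [IsDomain R] (N : ℕ) [NeZero N]
    [HasEnoughRootsOfUnity R N] [Fintype (rootsOfUnity N R)] (e : ℤ) :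
    ∑ g : rootsOfUnity N R, (((g : Rˣ) ^ e : Rˣ) : R) = if (N : ℤ) ∣ e then (N : R) else 0 := by
  classical
  let χ : rootsOfUnity N R →* R :=
    (Units.coeHom R).comp ((zpowGroupHom e).comp (rootsOfUnity N R).subtype)
  have hexp : Monoid.exponent (rootsOfUnity N R) = N := by
    rw [IsCyclic.exponent_eq_card, HasEnoughRootsOfUnity.natCard_rootsOfUnity]
  have hχ : χ = 1 ↔ (N : ℤ) ∣ e := by
    have hdvd := Group.exponent_dvd_iff_forall_zpow_eq_one (G := rootsOfUnity N R) (n := e)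
    rw [hexp] at hdvd
    rw [hdvd, DFunLike.ext_iff]
    refine forall_congr' fun g => ?_
    simp only [χ, MonoidHom.comp_apply, MonoidHom.one_apply, Units.coeHom_apply,
      zpowGroupHom_apply, Subgroup.coe_subtype]
    rw [← Units.val_one, Units.val_inj, ← Subgroup.coe_zpow, OneMemClass.coe_eq_one]
  have hcard : Fintype.card (rootsOfUnity N R) = N := by
    rw [← Nat.card_eq_fintype_card, HasEnoughRootsOfUnity.natCard_rootsOfUnity]
  change ∑ g, χ g = _
  rw [sum_hom_units, hcard]
  simp only [hχ, apply_ite (Nat.cast : ℕ → R), Nat.cast_zero]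

namespace ZMod

lemma natCast_val_mul_inv_mul {D : ℕ} [NeZero D] {β : ZMod D} (hβ : IsUnit β) (j : ZMod D) :
    ((j * β⁻¹).val : ZMod D) * β = j := by
  rw [natCast_zmod_val, mul_assoc, inv_mul_of_unit β hβ, mul_one]

lemma prod_univ_eq_prod_range_natCast_mul {D : ℕ} [NeZero D] {M : Type*} [CommMonoid M]
    {β : ZMod D} (hβ : IsUnit β) (f : ZMod D → M) : ∏ j, f j = ∏ t ∈ range D, f (t * β) := by
  refine (prod_nbij' (fun t : ℕ => (t : ZMod D) * β) (fun j => (j * β⁻¹).val)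
    (fun _ _ => mem_univ _) (fun j _ => mem_range.mpr (val_lt _)) (fun t ht => ?_)
    (fun j _ => natCast_val_mul_inv_mul hβ j) (fun _ _ => rfl)).symm
  rw [mul_assoc, mul_inv_of_unit β hβ, mul_one, val_natCast, Nat.mod_eq_of_lt (mem_range.mp ht)]

section TwistedOrbitSum

variable {D : ℕ} (Q : ℤ) (β : ZMod D)

def twistedOrbitSum (u : ZMod D → ℤ) (j : ZMod D) : ℤ :=
  ∑ t ∈ range D, Q ^ t * u (j + t * β)

lemma twistedOrbitSum_coboundary (v : ZMod D → ℤ) (j : ZMod D) :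
    twistedOrbitSum Q β (fun j => Q * v (j + β) - v j) j = (Q ^ D - 1) * v j := by
  have h := sum_range_sub (fun t : ℕ => Q ^ t * v (j + t * β)) D
  simp only [natCast_self, zero_mul, add_zero, pow_zero, one_mul, Nat.cast_zero] at h
  rw [twistedOrbitSum, sub_one_mul, ← h]
  refine sum_congr rfl fun t _ => ?_
  push_cast
  ring_nf

lemma mul_twistedOrbitSum_add (u : ZMod D → ℤ) (j : ZMod D) :
    Q * twistedOrbitSum Q β u (j + β) = twistedOrbitSum Q β u j + (Q ^ D - 1) * u j := by
  have h₁ := sum_range_succ' (fun t : ℕ => Q ^ t * u (j + t * β)) D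
  have h₂ := sum_range_succ (fun t : ℕ => Q ^ t * u (j + t * β)) D
  simp only [natCast_self, zero_mul, add_zero, pow_zero, one_mul, Nat.cast_zero] at h₁ h₂
  have hshift : ∑ t ∈ range D, Q * (Q ^ t * u (j + β + t * β))
      = ∑ t ∈ range D, Q ^ (t + 1) * u (j + ↑(t + 1) * β) :=
    sum_congr rfl fun t _ => by push_cast; ring_nf
  rw [twistedOrbitSum, twistedOrbitSum, mul_sum]
  linear_combination hshift - h₂.symm.trans h₁

variable [NeZero D] {Q β}

lemma dvd_twistedOrbitSum_add_iff (u : ZMod D → ℤ) (j : ZMod D) :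
    Q ^ D - 1 ∣ twistedOrbitSum Q β u (j + β) ↔ Q ^ D - 1 ∣ twistedOrbitSum Q β u j := by
  have hcop : IsCoprime (Q ^ D - 1) Q :=
    ⟨-1, Q ^ (D - 1), by rw [← pow_succ, Nat.sub_add_cancel NeZero.one_le]; ring⟩
  rw [← dvd_add_left (b := twistedOrbitSum Q β u j) (dvd_mul_right _ (u j)),
    ← mul_twistedOrbitSum_add]
  exact ⟨fun h => h.mul_left Q, hcop.dvd_of_dvd_mul_left⟩

lemma dvd_twistedOrbitSum_iff (hβ : IsUnit β) (u : ZMod D → ℤ) (j : ZMod D) :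
    Q ^ D - 1 ∣ twistedOrbitSum Q β u j ↔ Q ^ D - 1 ∣ twistedOrbitSum Q β u 0 := by
  have hmul (m : ℕ) : Q ^ D - 1 ∣ twistedOrbitSum Q β u (m * β) ↔
      Q ^ D - 1 ∣ twistedOrbitSum Q β u 0 := by
    induction m with
    | zero => simp
    | succ m ih => rwa [Nat.cast_succ, add_one_mul, dvd_twistedOrbitSum_add_iff]
  rw [← hmul, natCast_val_mul_inv_mul hβ]

theorem exists_twisted_coboundary_iff (hβ : IsUnit β) (hQ : Q ^ D ≠ 1) (u : ZMod D → ℤ) :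
    (∃ v : ZMod D → ℤ, ∀ j, u j = Q * v (j + β) - v j) ↔
      Q ^ D - 1 ∣ twistedOrbitSum Q β u 0 := by
  constructor
  · rintro ⟨v, hv⟩
    rw [funext hv, twistedOrbitSum_coboundary]
    exact dvd_mul_right _ _
  · intro h
    have hdvd j := (dvd_twistedOrbitSum_iff hβ u j).mpr h
    refine ⟨fun j => twistedOrbitSum Q β u j / (Q ^ D - 1), fun j => ?_⟩
    apply mul_left_cancel₀ (sub_ne_zero.mpr hQ)
    rw [mul_sub, mul_left_comm, Int.mul_ediv_cancel' (hdvd _), Int.mul_ediv_cancel' (hdvd _),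
      mul_twistedOrbitSum_add]
    ring

end TwistedOrbitSum

section TwistedPeriodic

variable {D : ℕ} {M : Type*} [Monoid M] (Q : ℕ) (β : ZMod D)

def IsTwistedPeriodic (y : ZMod D → M) : Prop := ∀ j, y j ^ Q = y (j + β)

/-- `(j * β⁻¹).val` is the position of `j` on the orbit `0, β, 2β, …` of a unit `β`. -/
def twistedOrbit (g : M) (j : ZMod D) : M := g ^ Q ^ (j * β⁻¹).val

variable {Q β}

lemma IsTwistedPeriodic.apply_add_natCast_mul {y : ZMod D → M} (hy : IsTwistedPeriodic Q β y)
    (j : ZMod D) (m : ℕ) : y (j + m * β) = y j ^ Q ^ m := by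
  induction m with
  | zero => simp
  | succ m ih => rw [Nat.cast_succ, add_one_mul, ← add_assoc, ← hy, ih, ← pow_mul, pow_succ]

lemma IsTwistedPeriodic.pow_pow_eq_self {y : ZMod D → M} (hy : IsTwistedPeriodic Q β y)
    (j : ZMod D) : y j ^ Q ^ D = y j := by
  simpa using (hy.apply_add_natCast_mul j D).symm

lemma twistedOrbit_zero (g : M) : twistedOrbit Q β g (0 : ZMod D) = g := by
  simp [twistedOrbit]

variable [NeZero D]

lemma isTwistedPeriodic_twistedOrbit (hβ : IsUnit β) {g : M} (hg : g ^ Q ^ D = g) :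
    IsTwistedPeriodic Q β (twistedOrbit Q β (D := D) g) := by
  intro j
  rw [twistedOrbit, twistedOrbit, add_mul, mul_inv_of_unit β hβ, val_add, val_one_eq_one_mod,
    Nat.add_mod_mod, pow_pow_mod_eq hg, ← pow_mul, pow_succ]

lemma IsTwistedPeriodic.eq_twistedOrbit (hβ : IsUnit β) {y : ZMod D → M}
    (hy : IsTwistedPeriodic Q β y) : y = twistedOrbit Q β (y 0) := by
  funext j
  conv_lhs => rw [← natCast_val_mul_inv_mul hβ j, ← zero_add (_ * β), hy.apply_add_natCast_mul]
  rfl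

lemma IsTwistedPeriodic.prod_zpow {G : Type*} [CommGroup G] (hβ : IsUnit β) {y : ZMod D → G}
    (hy : IsTwistedPeriodic Q β y) (u : ZMod D → ℤ) :
    ∏ j, y j ^ u j = y 0 ^ twistedOrbitSum (Q : ℤ) β u 0 := by
  rw [prod_univ_eq_prod_range_natCast_mul hβ, twistedOrbitSum, zpow_finset_sum]
  refine prod_congr rfl fun t _ => ?_
  have hyt : y (t * β) = y 0 ^ Q ^ t := by simpa using hy.apply_add_natCast_mul 0 t
  rw [zero_add, hyt, zpow_mul, ← Nat.cast_pow, zpow_natCast]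

def twistedPeriodicEquivRootsOfUnity {M : Type*} [CommMonoid M] (hβ : IsUnit β) (hQ : Q ≠ 0) :
    {y : ZMod D → Mˣ // IsTwistedPeriodic Q β y} ≃ rootsOfUnity (Q ^ D - 1) M where
  toFun y := ⟨y.1 0, (mem_rootsOfUnity _ _).mpr <|
    (pow_eq_self_iff_pow_pred_eq_one (pow_ne_zero D hQ)).mp (y.2.pow_pow_eq_self 0)⟩
  invFun g := ⟨twistedOrbit Q β (g : Mˣ), isTwistedPeriodic_twistedOrbit hβ <|
    (pow_eq_self_iff_pow_pred_eq_one (pow_ne_zero D hQ)).mpr ((mem_rootsOfUnity _ _).mp g.2)⟩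
  left_inv y := Subtype.ext (y.2.eq_twistedOrbit hβ).symm
  right_inv _ := Subtype.ext (twistedOrbit_zero _)

end TwistedPeriodic

end ZMod

theorem exists_sigma_twisted_coboundary_iff {ι : Type*} {d : ι → ℕ} [∀ i, NeZero (d i)] {Q : ℤ}
    (hQ : ∀ i, Q ^ d i ≠ 1) {β : ∀ i, ZMod (d i)} (hβ : ∀ i, IsUnit (β i))
    (u : (Σ i, ZMod (d i)) → ℤ) :
    (∃ v : (Σ i, ZMod (d i)) → ℤ, ∀ i j, u ⟨i, j⟩ = Q * v ⟨i, j + β i⟩ - v ⟨i, j⟩) ↔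
      ∀ i, Q ^ d i - 1 ∣ ZMod.twistedOrbitSum Q (β i) (fun j => u ⟨i, j⟩) 0 := by
  simp_rw [← ZMod.exists_twisted_coboundary_iff (hβ _) (hQ _)]
  refine ⟨fun ⟨v, hv⟩ i => ⟨fun j => v ⟨i, j⟩, hv i⟩, fun h => ?_⟩
  choose v hv using h
  exact ⟨fun x => v x.1 x.2, hv⟩

section TwistedFixedPoints

variable {p a : ℕ} [Fact p.Prime] {n : ℕ} {d : Fin n → ℕ} [∀ i, NeZero (d i)] {k : ℕ} {b : ℤ}

noncomputable def twistedFixedPointsEquiv (hb : ∀ i, IsUnit (b : ZMod (d i))) :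
    twistedFixedPoints p a n d k b ≃
      ∀ i, rootsOfUnity (((p ^ a) ^ k) ^ d i - 1) (AlgebraicClosure (ZMod p)) :=
  ((Equiv.piCurry _).subtypeEquiv fun _ => Iff.rfl).trans <| Equiv.subtypePiEquivPi.trans <|
    Equiv.piCongrRight fun i => ZMod.twistedPeriodicEquivRootsOfUnity (hb i)
      (pow_ne_zero _ (pow_ne_zero _ (Fact.out : p.Prime).ne_zero))

lemma prod_zpow_eq_prod_twistedFixedPointsEquiv (hb : ∀ i, IsUnit (b : ZMod (d i)))
    (y : twistedFixedPoints p a n d k b) (u : (Σ i : Fin n, ZMod (d i)) → ℤ) :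
    ∏ x, (y : _ → (AlgebraicClosure (ZMod p))ˣ) x ^ u x =
      ∏ i, (twistedFixedPointsEquiv hb y i : (AlgebraicClosure (ZMod p))ˣ) ^
        ZMod.twistedOrbitSum (((p ^ a) ^ k : ℕ) : ℤ) (b : ZMod (d i)) (fun j => u ⟨i, j⟩) 0 :=
  (Fintype.prod_sigma _).trans <|
    prod_congr rfl fun i _ => ZMod.IsTwistedPeriodic.prod_zpow (hb i) (y.2 i) _

theorem finsum_twistedFixedPoints_prod_zpow (ha : a ≠ 0) (hk : k ≠ 0)
    (hb : ∀ i, IsUnit (b : ZMod (d i))) (u : (Σ i : Fin n, ZMod (d i)) → ℤ) :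
    ∑ᶠ y ∈ twistedFixedPoints p a n d k b,
        ((∏ x, y x ^ u x : (AlgebraicClosure (ZMod p))ˣ) : AlgebraicClosure (ZMod p)) =
      ∏ i, if ((((p ^ a) ^ k) ^ d i - 1 : ℕ) : ℤ) ∣
          ZMod.twistedOrbitSum (((p ^ a) ^ k : ℕ) : ℤ) (b : ZMod (d i)) (fun j => u ⟨i, j⟩) 0
        then ((((p ^ a) ^ k) ^ d i - 1 : ℕ) : AlgebraicClosure (ZMod p)) else 0 := by
  have (i : Fin n) : NeZero ((((p ^ a) ^ k) ^ d i - 1 : ℕ) : AlgebraicClosure (ZMod p)) := by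
    rw [← pow_mul, ← pow_mul, CharP.natCast_pow_sub_one p (Fact.out : p.Prime).ne_zero
      (by simp [ha, hk, NeZero.ne])]
    exact ⟨neg_ne_zero.mpr one_ne_zero⟩
  have (i : Fin n) : NeZero (((p ^ a) ^ k) ^ d i - 1) :=
    .of_neZero_natCast (AlgebraicClosure (ZMod p))
  let (i : Fin n) :=
    Fintype.ofFinite (rootsOfUnity (((p ^ a) ^ k) ^ d i - 1) (AlgebraicClosure (ZMod p)))
  rw [← finsum_set_coe_eq_finsum_mem, ← finsum_comp_equiv (twistedFixedPointsEquiv hb).symm,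
    finsum_eq_sum_of_fintype]
  simp only [prod_zpow_eq_prod_twistedFixedPointsEquiv hb (u := u), Equiv.apply_symm_apply,
    Units.coe_prod]
  rw [← prod_congr rfl fun i _ => sum_rootsOfUnity_zpow _ _, Fintype.prod_sum]

end TwistedFixedPoints

theorem twistedFixedPoints_char_sum_general (p a : ℕ) [Fact p.Prime] (ha : 1 ≤ a)
    (n : ℕ) (d : Fin n → ℕ) [∀ i, NeZero (d i)]
    (k : ℕ) (hk : 1 ≤ k) (b : ℤ) (hb : IsCoprime b ((Finset.univ.lcm d : ℕ) : ℤ))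
    (u : (Σ i : Fin n, ZMod (d i)) → ℤ) :
    ((∃ v : (Σ i : Fin n, ZMod (d i)) → ℤ, ∀ (i : Fin n) (j : ZMod (d i)),
        u ⟨i, j⟩ = ((p : ℤ) ^ a) ^ k * v ⟨i, j + (b : ZMod (d i))⟩ - v ⟨i, j⟩) →
      (∑ᶠ y ∈ twistedFixedPoints p a n d k b,
          ((∏ y' : Σ i : Fin n, ZMod (d i), y y' ^ u y' :
            (AlgebraicClosure (ZMod p))ˣ) : AlgebraicClosure (ZMod p)))
        = ((∏ i : Fin n, ((p ^ a) ^ (k * d i) - 1) : ℕ) : AlgebraicClosure (ZMod p))) ∧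
    ((¬ ∃ v : (Σ i : Fin n, ZMod (d i)) → ℤ, ∀ (i : Fin n) (j : ZMod (d i)),
        u ⟨i, j⟩ = ((p : ℤ) ^ a) ^ k * v ⟨i, j + (b : ZMod (d i))⟩ - v ⟨i, j⟩) →
      (∑ᶠ y ∈ twistedFixedPoints p a n d k b,
          ((∏ y' : Σ i : Fin n, ZMod (d i), y y' ^ u y' :
            (AlgebraicClosure (ZMod p))ˣ) : AlgebraicClosure (ZMod p)))
        = 0) := by
  have hbu (i : Fin n) : IsUnit (b : ZMod (d i)) :=
    (ZMod.coe_int_isUnit_iff_isCoprime b (d i)).mpr <| hb.symm.of_isCoprime_of_dvd_left <|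
      Int.natCast_dvd_natCast.mpr (Finset.dvd_lcm (Finset.mem_univ i))
  have hQ (i : Fin n) : 1 < ((p ^ a) ^ k) ^ d i :=
    Nat.one_lt_pow (NeZero.ne _) <| Nat.one_lt_pow (by omega) <|
      Nat.one_lt_pow (by omega) (Fact.out : p.Prime).one_lt
  have hcast (i : Fin n) :
      ((((p ^ a) ^ k) ^ d i - 1 : ℕ) : ℤ) = (((p : ℤ) ^ a) ^ k) ^ d i - 1 := by
    push_cast [(hQ i).le]
    ring
  rw [finsum_twistedFixedPoints_prod_zpow (by omega) (by omega) hbu,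
    exists_sigma_twisted_coboundary_iff (fun i => by exact_mod_cast (hQ i).ne') hbu]
  simp only [hcast, Nat.cast_pow]
  refine ⟨fun h => ?_, fun h => ?_⟩
  · rw [prod_congr rfl fun i _ => if_pos (h i), Nat.cast_prod]
    simp_rw [pow_mul]
  · obtain ⟨i, hi⟩ := not_forall.mp h
    exact prod_eq_zero (mem_univ i) (if_neg hi)

/-- **Orthogonality of characters on the twisted fixed point set.**
For `b` coprime to `d = lcm(d₁, …, dₙ)` and `u : Y → ℤ`, the character sum
`Σ_{y ∈ W_k^{(b)}} ∏_{(i,j)} y(i,j)^{u(i,j)}` (in `K`) equals `∏ᵢ (q^{k dᵢ} − 1)` if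
`u(i,j) = q^k v(i, j+b) − v(i,j)` for some `v : Y → ℤ`, and equals `0` otherwise. -/
theorem twistedFixedPoints_char_sum (p a : ℕ) [Fact p.Prime] (ha : 1 ≤ a)
    (n : ℕ) (hn : 1 ≤ n) (d : Fin n → ℕ) [∀ i, NeZero (d i)]
    (k : ℕ) (hk : 1 ≤ k) (b : ℤ) (hb : IsCoprime b ((Finset.univ.lcm d : ℕ) : ℤ))
    (u : (Σ i : Fin n, ZMod (d i)) → ℤ) :
    ((∃ v : (Σ i : Fin n, ZMod (d i)) → ℤ, ∀ (i : Fin n) (j : ZMod (d i)),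
        u ⟨i, j⟩ = ((p : ℤ) ^ a) ^ k * v ⟨i, j + (b : ZMod (d i))⟩ - v ⟨i, j⟩) →
      (∑ᶠ y ∈ twistedFixedPoints p a n d k b,
          ((∏ y' : Σ i : Fin n, ZMod (d i), y y' ^ u y' :
            (AlgebraicClosure (ZMod p))ˣ) : AlgebraicClosure (ZMod p)))
        = ((∏ i : Fin n, ((p ^ a) ^ (k * d i) - 1) : ℕ) : AlgebraicClosure (ZMod p))) ∧
    ((¬ ∃ v : (Σ i : Fin n, ZMod (d i)) → ℤ, ∀ (i : Fin n) (j : ZMod (d i)),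
        u ⟨i, j⟩ = ((p : ℤ) ^ a) ^ k * v ⟨i, j + (b : ZMod (d i))⟩ - v ⟨i, j⟩) →
      (∑ᶠ y ∈ twistedFixedPoints p a n d k b,
          ((∏ y' : Σ i : Fin n, ZMod (d i), y y' ^ u y' :
            (AlgebraicClosure (ZMod p))ˣ) : AlgebraicClosure (ZMod p)))
        = 0) :=
  twistedFixedPoints_char_sum_general p a ha n d k hk b hb u
end

section
/- Let k ≥ 1, let b be an integer coprime to d, and let u : Y → ℤ. Then ∏_{(i,j) ∈ Y} y(i,j)^{u(i,j)} = 1 in Kˣ for every y ∈ W_k^{(b)} if and only if there exists v : Y → ℤ such that u(i,j) = q^k · v(i, j + b) − v(i, j) for all (i, j) ∈ Y. (In matrix form: the character y ↦ y^u is trivial on W_k^{(b)} exactly when u lies in the lattice (q^k P^{−b} − I)ℤ^N.) -/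
/-!
Let `σ` be the permutation `(i, j) ↦ (i, j + b)` of `Y`, let `Q = q^k`, and fix `N > 0` with
`σ^N = 1`. If `u = Q·(v ∘ σ) - v`, then `y^Q = y ∘ σ` turns `∏ y^u` into
`∏ (y ∘ σ)^(v ∘ σ) / ∏ y^v = 1`.

Conversely, the orbit sums `S x = ∑_{s<N} Q^s u(σ^s x)` satisfy
`Q·S(σ x) - S x = (Q^N - 1)·u x`, so `v = S / (Q^N - 1)` solves the equation as soon as
`Q^N - 1` divides every `S x`. Since `Q^N - 1 = -1` in `K`, there is a primitive
`(Q^N - 1)`-th root of unity `ζ`; the function `x ↦ ∏_{s<N, σ^s x₀ = x} ζ^(Q^s)` lies in `W`,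
and the character sends it to `ζ^(S x₀)`, which gives the divisibility.
-/

open Finset Equiv

theorem Finset.prod_zpow_eq_zpow_sum {ι G : Type*} [CommGroup G] (s : Finset ι) (f : ι → ℤ)
    (ζ : G) : ∏ i ∈ s, ζ ^ f i = ζ ^ ∑ i ∈ s, f i :=
  (map_sum (zpowersHom G ζ).toAdditiveRight f s).symm

section TwistedOrbit

variable {X : Type*} (σ : Perm X) (N : ℕ)

def twistedOrbitSum (Q : ℤ) (u : X → ℤ) (x : X) : ℤ :=
  ∑ s ∈ range N, Q ^ s * u ((σ ^ s) x)

open Classical in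
noncomputable def twistedOrbitPoint {G : Type*} [CommMonoid G] (Q : ℕ) (ζ : G) (x₀ : X) :
    X → G :=
  fun x => ∏ s ∈ range N, if (σ ^ s) x₀ = x then ζ ^ Q ^ s else 1

variable {σ N}

theorem mul_twistedOrbitSum_apply_sub (hσ : σ ^ N = 1) (Q : ℤ) (u : X → ℤ) (x : X) :
    Q * twistedOrbitSum σ N Q u (σ x) - twistedOrbitSum σ N Q u x = (Q ^ N - 1) * u x := by
  have telescope := sum_range_sub (fun s => Q ^ s * u ((σ ^ s) x)) N
  simp only [hσ, pow_zero, one_mul, Perm.one_apply] at telescope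
  rw [twistedOrbitSum, twistedOrbitSum, mul_sum, ← sum_sub_distrib, sub_one_mul, ← telescope]
  refine sum_congr rfl fun s _ => ?_
  rw [pow_succ', mul_assoc, pow_succ, Perm.mul_apply]

theorem exists_eq_mul_apply_sub_of_dvd_twistedOrbitSum (hσ : σ ^ N = 1) {Q : ℤ}
    (hQ : Q ^ N ≠ 1) {u : X → ℤ} (h : ∀ x, Q ^ N - 1 ∣ twistedOrbitSum σ N Q u x) :
    ∃ v : X → ℤ, ∀ x, u x = Q * v (σ x) - v x := by
  refine ⟨fun x => twistedOrbitSum σ N Q u x / (Q ^ N - 1), fun x => ?_⟩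
  refine mul_left_cancel₀ (sub_ne_zero.mpr hQ) ?_
  rw [mul_sub, mul_left_comm, Int.mul_ediv_cancel' (h _), Int.mul_ediv_cancel' (h _),
    mul_twistedOrbitSum_apply_sub hσ]

theorem prod_zpow_eq_one_of_eq_mul_apply_sub [Fintype X] {G : Type*} [CommGroup G] {Q : ℕ}
    {y : X → G} (hy : ∀ x, y x ^ Q = y (σ x)) {u v : X → ℤ}
    (huv : ∀ x, u x = Q * v (σ x) - v x) : ∏ x, y x ^ u x = 1 := by
  calc ∏ x, y x ^ u x = ∏ x, y (σ x) ^ v (σ x) / y x ^ v x := by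
        refine prod_congr rfl fun x _ => ?_
        rw [huv x, zpow_sub, zpow_mul, zpow_natCast, hy x, div_eq_mul_inv]
    _ = 1 := by rw [prod_div_distrib, Equiv.prod_comp σ fun x => y x ^ v x, div_self']

theorem twistedOrbitPoint_pow_apply {G : Type*} [CommGroup G] (hσ : σ ^ N = 1) {Q : ℕ} {ζ : G}
    (hζ : ζ ^ Q ^ N = ζ) (x₀ x : X) :
    twistedOrbitPoint σ N Q ζ x₀ x ^ Q = twistedOrbitPoint σ N Q ζ x₀ (σ x) := by
  classical
  set f : ℕ → G := fun s => if (σ ^ s) x₀ = σ x then ζ ^ Q ^ s else 1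
  have hf : f N = f 0 := by simp only [f, hσ, pow_zero, hζ, pow_one]
  have shift : ∏ s ∈ range N, f (s + 1) = ∏ s ∈ range N, f s := by
    refine mul_right_cancel (b := f 0) ?_
    rw [← prod_range_succ', prod_range_succ, hf]
  rw [twistedOrbitPoint, twistedOrbitPoint, ← prod_pow, ← shift]
  refine prod_congr rfl fun s _ => ?_
  simp only [f, pow_succ' σ, pow_succ Q, Perm.mul_apply, σ.injective.eq_iff, ite_pow, one_pow,
    ← pow_mul]

theorem prod_twistedOrbitPoint_zpow [Fintype X] {G : Type*} [CommGroup G] (Q : ℕ) (ζ : G)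
    (x₀ : X) (u : X → ℤ) :
    ∏ x, twistedOrbitPoint σ N Q ζ x₀ x ^ u x = ζ ^ twistedOrbitSum σ N Q u x₀ := by
  classical
  simp only [twistedOrbitPoint, twistedOrbitSum, ← prod_zpow_eq_zpow_sum, ← prod_zpow]
  rw [prod_comm]
  refine prod_congr rfl fun s _ => ?_
  simp only [ite_pow, one_zpow, prod_ite_eq, mem_univ, ↓reduceIte]
  rw [zpow_mul, ← Nat.cast_pow, zpow_natCast]

theorem dvd_twistedOrbitSum_of_forall_prod_zpow_eq_one {K : Type*} [Field K] [IsSepClosed K]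
    [Fintype X] (hσ : σ ^ N = 1) (hN : N ≠ 0) {Q : ℕ} (hQ : Q ≠ 0) (hQK : (Q : K) = 0)
    {u : X → ℤ} (H : ∀ y : X → Kˣ, (∀ x, y x ^ Q = y (σ x)) → ∏ x, y x ^ u x = 1) (x₀ : X) :
    (Q : ℤ) ^ N - 1 ∣ twistedOrbitSum σ N Q u x₀ := by
  have hQN : 1 ≤ Q ^ N := Nat.one_le_pow _ _ (Nat.pos_of_ne_zero hQ)
  have : NeZero ((Q ^ N - 1 : ℕ) : K) := ⟨by simp [Nat.cast_sub hQN, hQK, hN]⟩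
  obtain ⟨ζ, hζ⟩ := HasEnoughRootsOfUnity.exists_primitiveRoot K (Q ^ N - 1)
  obtain ⟨η, hη⟩ : ∃ η : Kˣ, IsPrimitiveRoot η (Q ^ N - 1) :=
    ⟨_, hζ.isUnit_unit (NeZero.of_neZero_natCast K).ne⟩
  have hηQ : η ^ Q ^ N = η := by rw [← Nat.sub_add_cancel hQN, pow_succ, hη.pow_eq_one, one_mul]
  have h := H _ (twistedOrbitPoint_pow_apply hσ hηQ x₀)
  rw [prod_twistedOrbitPoint_zpow, hη.zpow_eq_one_iff_dvd] at h
  exact_mod_cast h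

end TwistedOrbit

theorem forall_prod_zpow_eq_one_iff {K X : Type*} [Field K] [IsSepClosed K] [Fintype X]
    (σ : Perm X) {Q : ℕ} (hQ : Q ≠ 0) (hQK : (Q : K) = 0) (u : X → ℤ) :
    (∀ y : X → Kˣ, (∀ x, y x ^ Q = y (σ x)) → ∏ x, y x ^ u x = 1) ↔
      ∃ v : X → ℤ, ∀ x, u x = Q * v (σ x) - v x := by
  refine ⟨fun H => ?_, fun ⟨v, huv⟩ y hy => prod_zpow_eq_one_of_eq_mul_apply_sub hy huv⟩
  have hN := (orderOf_pos σ).ne'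
  have hQN : (Q : ℤ) ^ orderOf σ ≠ 1 := fun h => by
    simpa [hQK, hN] using congrArg (Int.cast : ℤ → K) h
  exact exists_eq_mul_apply_sub_of_dvd_twistedOrbitSum (pow_orderOf_eq_one σ) hQN
    (dvd_twistedOrbitSum_of_forall_prod_zpow_eq_one (pow_orderOf_eq_one σ) hN hQ hQK H)

theorem twistedFixedPoints_char_trivial_iff_general (p a : ℕ) [Fact p.Prime] (ha : 1 ≤ a)
    (n : ℕ) (d : Fin n → ℕ) [∀ i, NeZero (d i)]
    (k : ℕ) (hk : 1 ≤ k) (b : ℤ)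
    (u : (Σ i : Fin n, ZMod (d i)) → ℤ) :
    (∀ y ∈ twistedFixedPoints p a n d k b,
        (∏ y' : Σ i : Fin n, ZMod (d i), y y' ^ u y') = (1 : (AlgebraicClosure (ZMod p))ˣ)) ↔
      ∃ v : (Σ i : Fin n, ZMod (d i)) → ℤ, ∀ (i : Fin n) (j : ZMod (d i)),
        u ⟨i, j⟩ = ((p : ℤ) ^ a) ^ k * v ⟨i, j + (b : ZMod (d i))⟩ - v ⟨i, j⟩ := by
  have hQ : (p ^ a) ^ k ≠ 0 := pow_ne_zero _ (pow_ne_zero _ (Fact.out : p.Prime).ne_zero)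
  have hQK : (((p ^ a) ^ k : ℕ) : AlgebraicClosure (ZMod p)) = 0 := by
    rw [Nat.cast_pow, Nat.cast_pow, CharP.cast_eq_zero, zero_pow (by omega), zero_pow (by omega)]
  have key := forall_prod_zpow_eq_one_iff
    (Equiv.sigmaCongrRight fun i => Equiv.addRight (b : ZMod (d i))) hQ hQK u
  simpa [twistedFixedPoints, Sigma.forall] using key

/-- **Triviality of a character on the twisted fixed point set.**
For `b` coprime to `d = lcm(d₁, …, dₙ)` and `u : Y → ℤ`, the character `y ↦ yᵘ` is trivial
on `W_k^{(b)}` if and only if `u` lies in the lattice `(q^k P^{−b} − I)ℤ^N`, i.e. iff there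
is `v : Y → ℤ` with `u(i,j) = q^k·v(i, j+b) − v(i,j)` for all `(i,j)`. -/
theorem twistedFixedPoints_char_trivial_iff (p a : ℕ) [Fact p.Prime] (ha : 1 ≤ a)
    (n : ℕ) (hn : 1 ≤ n) (d : Fin n → ℕ) [∀ i, NeZero (d i)]
    (k : ℕ) (hk : 1 ≤ k) (b : ℤ) (hb : IsCoprime b ((Finset.univ.lcm d : ℕ) : ℤ))
    (u : (Σ i : Fin n, ZMod (d i)) → ℤ) :
    (∀ y ∈ twistedFixedPoints p a n d k b,
        (∏ y' : Σ i : Fin n, ZMod (d i), y y' ^ u y') = (1 : (AlgebraicClosure (ZMod p))ˣ)) ↔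
      ∃ v : (Σ i : Fin n, ZMod (d i)) → ℤ, ∀ (i : Fin n) (j : ZMod (d i)),
        u ⟨i, j⟩ = ((p : ℤ) ^ a) ^ k * v ⟨i, j + (b : ZMod (d i))⟩ - v ⟨i, j⟩ :=
  twistedFixedPoints_char_trivial_iff_general p a ha n d k hk b u
end

section
/- Let V be a finite-dimensional vector space over a field K, let Φ, H : V →ₗ[K] V be linear endomorphisms with H ∘ Φ = Φ ∘ H, and let λ ∈ K be such that Φ − λ·id is nilpotent. Then for every k ≥ 1, trace(H ∘ Φ^k) = λ^k · trace(H). -/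
/-! `Φ ^ k - λ ^ k` is a multiple of the nilpotent `Φ - λ` by a polynomial in `Φ`, hence nilpotent,
and it commutes with `H`; so `H ∘ (Φ ^ k - λ ^ k)` is nilpotent and has trace zero. -/

theorem Commute.isNilpotent_pow_sub_pow {R : Type*} [Ring R] {x y : R} (h : Commute x y)
    (hxy : IsNilpotent (x - y)) (n : ℕ) : IsNilpotent (x ^ n - y ^ n) := by
  have hx : Commute x (x - y) := (Commute.refl x).sub_right h
  have hy : Commute y (x - y) := h.symm.sub_right (Commute.refl y)
  rw [← h.geom_sum₂_mul n]
  exact Commute.isNilpotent_mul_left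
    (Commute.sum_left _ _ _ fun i _ ↦ (hx.pow_left i).mul_left (hy.pow_left _)) hxy

theorem trace_comp_pow_of_nilpotent_sub_smul_id_general
    {K V : Type*} [Field K] [AddCommGroup V] [Module K V]
    (Φ H : Module.End K V) (hcomm : H ∘ₗ Φ = Φ ∘ₗ H) (lam : K)
    (hnil : IsNilpotent (Φ - lam • (1 : Module.End K V)))
    (k : ℕ) :
    LinearMap.trace K V (H ∘ₗ (Φ ^ k)) = lam ^ k * LinearMap.trace K V H := by
  have hΦ : IsNilpotent (Φ - algebraMap K (Module.End K V) lam) := by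
    rwa [Algebra.algebraMap_eq_smul_one]
  have hΦk : IsNilpotent (Φ ^ k - algebraMap K (Module.End K V) (lam ^ k)) := by
    rw [map_pow]
    exact (Algebra.commute_algebraMap_right lam Φ).isNilpotent_pow_sub_pow hΦ k
  exact LinearMap.trace_comp_eq_mul_of_commute_of_isNilpotent _ (Commute.pow_right hcomm k) hΦk

/-- **Twisted trace on a generalized eigenspace.**
If `Φ, H` are commuting endomorphisms of a finite-dimensional vector space `V` and
`Φ - λ·id` is nilpotent, then `Tr(H ∘ Φ^k) = λ^k · Tr(H)` for every `k ≥ 1`. -/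
theorem trace_comp_pow_of_nilpotent_sub_smul_id
    {K V : Type*} [Field K] [AddCommGroup V] [Module K V] [FiniteDimensional K V]
    (Φ H : Module.End K V) (hcomm : H ∘ₗ Φ = Φ ∘ₗ H) (lam : K)
    (hnil : IsNilpotent (Φ - lam • (1 : Module.End K V)))
    (k : ℕ) (hk : 1 ≤ k) :
    LinearMap.trace K V (H ∘ₗ (Φ ^ k)) = lam ^ k * LinearMap.trace K V H :=
  trace_comp_pow_of_nilpotent_sub_smul_id_general Φ H hcomm lam hnil k
end

section
/- Let F ∈ K⟦T⟧ have constant coefficient 1. Then (δ_{d_1} ∘ δ_{d_2} ∘ ⋯ ∘ δ_{d_n})(F) = ∏_{I ⊆ {1, …, n}} (rescale(q^{d_I}) F)^{(−1)^{|I|}}, where d_I := Σ_{i ∈ I} d_i (with d_∅ = 0), and the product with integer exponents is taken in the group of units of K⟦T⟧ (power series with constant coefficient 1 are units). -/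
/-!
Write `R_c` for the endomorphism of the unit group of `K⟦T⟧` induced by `rescale (q ^ c)`, so
that `δ_c G = G / R_c G` and `R_a ∘ R_b = R_{a+b}`. Applied to a product
`∏_J (R_{d_J} F)^{ε_J}` over the subsets `J` of `{2, …, n}`, the operator `δ_{d_1}` keeps every
factor and adds the factor `(R_{d_1 + d_J} F)^{-ε_J}`; these are the factors indexed by `J ∪ {1}`.
Induction on `n` then gives the expansion over all subsets of `{1, …, n}`.
-/

/-- Dwork's `δ_c` operator on units of the power series ring:
`δ_c(F) = F · (rescale(q^c) F)⁻¹`, where `rescale(q^c)` sends `T` to `q^c T`. -/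
noncomputable def deltaOp {K : Type*} [CommRing K] (q : K) (c : ℕ) :
    (PowerSeries K)ˣ → (PowerSeries K)ˣ :=
  fun F => F * (Units.map (PowerSeries.rescale (q ^ c)).toMonoidHom F)⁻¹

namespace Finset

theorem powerset_map {α γ : Type*} (e : α ↪ γ) (s : Finset α) :
    (s.map e).powerset = s.powerset.map (mapEmbedding e).toEmbedding := by
  ext t
  simp [subset_map_iff, eq_comm]

theorem _root_.Fin.prod_univ_finset_succ {β : Type*} [CommMonoid β] {n : ℕ}
    (g : Finset (Fin (n + 1)) → β) :
    ∏ I, g I = (∏ J : Finset (Fin n), g (J.map (Fin.succEmb n))) *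
      ∏ J : Finset (Fin n), g (insert 0 (J.map (Fin.succEmb n))) := by
  rw [← powerset_univ, Fin.univ_succ, cons_eq_insert, prod_powerset_insert (by simp),
    powerset_map, prod_map, prod_map, powerset_univ]
  rfl

end Finset

namespace PowerSeries

open scoped PowerSeries

variable {K : Type*} [CommRing K]

theorem units_map_rescale_rescale (a b : K) (F : K⟦X⟧ˣ) :
    Units.map (rescale b).toMonoidHom (Units.map (rescale a).toMonoidHom F) =
      Units.map (rescale (a * b)).toMonoidHom F :=
  Units.ext (rescale_rescale _ a b)

end PowerSeries

open PowerSeries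
open scoped PowerSeries

theorem deltaOp_prod_zpow {K ι : Type*} [CommRing K] (q : K) (c : ℕ) (s : Finset ι) (a : ι → ℕ) (e : ι → ℤ)
    (F : K⟦X⟧ˣ) :
    deltaOp q c (∏ i ∈ s, Units.map (rescale (q ^ a i)).toMonoidHom F ^ e i) =
      (∏ i ∈ s, Units.map (rescale (q ^ a i)).toMonoidHom F ^ e i) *
        ∏ i ∈ s, Units.map (rescale (q ^ (c + a i))).toMonoidHom F ^ (-e i) := by
  simp only [deltaOp, map_prod, map_zpow, units_map_rescale_rescale, ← pow_add, add_comm c,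
    zpow_neg, Finset.prod_inv_distrib]

theorem deltaOp_comp_eq_prod_subsets_general {K : Type*} [CommRing K] (q : K)
    (n : ℕ) (d : Fin n → ℕ)
    (F : (PowerSeries K)ˣ) :
    (((List.finRange n).map fun i => deltaOp q (d i)).foldr (· ∘ ·) id) F =
      ∏ I : Finset (Fin n),
        (Units.map (PowerSeries.rescale (q ^ (∑ i ∈ I, d i))).toMonoidHom F)
          ^ ((-1 : ℤ) ^ I.card) := by
  induction n with
  | zero =>
    rw [Fintype.prod_unique, Subsingleton.elim default ∅]
    simp
  | succ n ih =>
    rw [List.finRange_succ, List.map_cons, List.foldr_cons, List.map_map, Function.comp_apply,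
      Function.comp_def, ih, deltaOp_prod_zpow, Fin.prod_univ_finset_succ]
    congr 1 <;> refine Finset.prod_congr rfl fun J _ => ?_
    · simp
    · rw [Finset.sum_insert (by simp), Finset.card_insert_of_notMem (by simp), pow_succ, mul_neg_one]
      simp

/-- **Subset expansion of the partial `δ_d`-operator.**
For a power series `F` with constant coefficient `1` (a unit of `K⟦T⟧`),
`(δ_{d₁} ∘ ⋯ ∘ δ_{dₙ})(F) = ∏_{I ⊆ {1,…,n}} (rescale(q^{d_I}) F)^{(−1)^{|I|}}`,
the product with integer exponents taken in the unit group of `K⟦T⟧`. -/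
theorem deltaOp_comp_eq_prod_subsets {K : Type*} [CommRing K] (q : K)
    (n : ℕ) (hn : 1 ≤ n) (d : Fin n → ℕ) (hd : ∀ i, 0 < d i)
    (F : (PowerSeries K)ˣ) (hF : PowerSeries.constantCoeff (F : PowerSeries K) = 1) :
    (((List.finRange n).map fun i => deltaOp q (d i)).foldr (· ∘ ·) id) F =
      ∏ I : Finset (Fin n),
        (Units.map (PowerSeries.rescale (q ^ (∑ i ∈ I, d i))).toMonoidHom F)
          ^ ((-1 : ℤ) ^ I.card) :=
  deltaOp_comp_eq_prod_subsets_general q n d F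
end

section
/- Let λ : ℕ → K be injective with λ_i ≠ 0 for all i and ‖λ_i‖ → 0 as i → ∞, and let c : ℕ → K be bounded (there is C with ‖c_i‖ ≤ C for all i). If for every integer k ≥ 1 the family (c_i · λ_i^k)_{i ∈ ℕ} is summable with Σ_{i} c_i λ_i^k = 0, then c_i = 0 for every i. -/
/-!
Put `d_i = c_i λ_i`, so that `Σ d_i λ_i^k = 0` for every `k ≥ 0`; in particular `d_i → 0`.
Fix `i₀` and `r = ‖λ_{i₀}‖ > 0`. Only finitely many `λ_i` have norm `≥ r`, and the others have
norm at most some `r' < r`. Multiplying `d` by `P(λ_i)`, where `P` is the Lagrange polynomial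
that is `1` at `λ_{i₀}` and `0` at the other large `λ_i`, keeps all power sums zero and leaves
`d_{i₀} λ_{i₀}^k` equal to minus a sum of terms of size `O(r'^k)`. By the ultrametric inequality
that sum is `O(r'^k)` as well, so `‖d_{i₀}‖ r^k = O(r'^k)`, forcing `d_{i₀} = 0`.
-/

open Filter Topology Polynomial

lemma nonpos_of_forall_mul_pow_le {a B r R : ℝ} (hr : 0 ≤ r) (hrR : r < R)
    (h : ∀ k : ℕ, a * R ^ k ≤ B * r ^ k) : a ≤ 0 := by
  have hR : 0 < R := hr.trans_lt hrR
  have hlim : Tendsto (fun k : ℕ => B * (r / R) ^ k) atTop (𝓝 0) := by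
    simpa using (tendsto_pow_atTop_nhds_zero_of_lt_one (div_nonneg hr hR.le)
      ((div_lt_one hR).2 hrR)).const_mul B
  refine ge_of_tendsto' hlim fun k => ?_
  rw [div_pow, ← mul_div_assoc, le_div_iff₀ (pow_pos hR k)]
  exact h k

lemma exists_lt_forall_lt_imp_le_of_tendsto_cofinite {ι : Type*} {f : ι → ℝ}
    (hf : Tendsto f cofinite (𝓝 0)) {r : ℝ} (hr : 0 < r) :
    ∃ r' < r, 0 ≤ r' ∧ ∀ i, f i < r → f i ≤ r' := by
  classical
  have hfin : {i | r / 2 ≤ f i}.Finite := by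
    simpa only [not_lt] using eventually_cofinite.1 (hf.eventually (gt_mem_nhds (half_pos hr)))
  let t := insert (r / 2) ((hfin.toFinset.filter (f · < r)).image f)
  have ht : t.Nonempty := Finset.insert_nonempty _ _
  refine ⟨t.max' ht, ?_, ?_, fun i hi => ?_⟩
  · obtain h | ⟨i, hi, hfi⟩ := by simpa [t] using t.max'_mem ht
    · linarith
    · exact hfi ▸ hi.2
  · exact (half_pos hr).le.trans (t.le_max' _ (Finset.mem_insert_self _ _))
  · by_cases hri : r / 2 ≤ f i
    · exact t.le_max' _ (Finset.mem_insert_of_mem (Finset.mem_image_of_mem f (by simp [hri, hi])))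
    · exact (not_le.1 hri).le.trans (t.le_max' _ (Finset.mem_insert_self _ _))

lemma hasSum_mul_eval_of_forall_hasSum_mul_pow {ι R : Type*} [CommSemiring R]
    [TopologicalSpace R] [IsTopologicalSemiring R] {d x : ι → R}
    (h : ∀ k, HasSum (fun i => d i * x i ^ k) 0) (P : R[X]) :
    HasSum (fun i => d i * P.eval (x i)) 0 := by
  induction P using Polynomial.induction_on' with
  | add p q hp hq => simpa [mul_add] using hp.add hq
  | monomial n a => simpa [mul_left_comm] using (h n).mul_left a

section Ultrametric

variable {ι K : Type*} [NormedField K] [IsUltrametricDist K]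

lemma eq_zero_of_forall_hasSum_mul_pow_of_norm_le {e x : ι → K} {i₀ : ι} {B r : ℝ}
    (hB : ∀ i, ‖e i‖ ≤ B) (hr : 0 ≤ r) (hr₀ : r < ‖x i₀‖)
    (hx : ∀ i ≠ i₀, e i = 0 ∨ ‖x i‖ ≤ r) (h : ∀ k, HasSum (fun i => e i * x i ^ k) 0) :
    e i₀ = 0 := by
  classical
  refine norm_le_zero_iff.1 (nonpos_of_forall_mul_pow_le (B := B) hr hr₀ fun k => ?_)
  have htail := hasSum_ite_sub_hasSum (h k) i₀
  have hBr : 0 ≤ B * r ^ k := mul_nonneg ((norm_nonneg _).trans (hB i₀)) (pow_nonneg hr k)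
  calc ‖e i₀‖ * ‖x i₀‖ ^ k = ‖∑' i, if i = i₀ then 0 else e i * x i ^ k‖ := by
        rw [htail.tsum_eq, zero_sub, norm_neg, norm_mul, norm_pow]
    _ ≤ B * r ^ k := by
        refine IsUltrametricDist.norm_tsum_le_of_forall_le_of_nonneg hBr fun i => ?_
        split_ifs with hi
        · simpa using hBr
        obtain he | hxi := hx i hi
        · simpa [he] using hBr
        rw [norm_mul, norm_pow]
        exact mul_le_mul (hB i) (pow_le_pow_left₀ (norm_nonneg _) hxi k) (by positivity)
          ((norm_nonneg _).trans (hB i))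

theorem eq_zero_of_forall_hasSum_mul_pow {d x : ι → K} (hinj : Function.Injective x)
    (hlim : Tendsto (fun i => ‖x i‖) cofinite (𝓝 0))
    (h : ∀ k, HasSum (fun i => d i * x i ^ k) 0) {i₀ : ι} (hi₀ : x i₀ ≠ 0) : d i₀ = 0 := by
  classical
  set r := ‖x i₀‖
  have hr : 0 < r := norm_pos_iff.2 hi₀
  have hfin : {i | r ≤ ‖x i‖}.Finite := by
    simpa only [not_lt] using eventually_cofinite.1 (hlim.eventually (gt_mem_nhds hr))
  obtain ⟨r', hr'r, hr', hsmall⟩ := exists_lt_forall_lt_imp_le_of_tendsto_cofinite hlim hr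
  obtain ⟨P, hP₀, hP⟩ : ∃ P : K[X], P.eval (x i₀) = 1 ∧ ∀ i ≠ i₀, r ≤ ‖x i‖ → P.eval (x i) = 0 :=
    ⟨Lagrange.basis hfin.toFinset x i₀,
      Lagrange.eval_basis_self hinj.injOn (hfin.mem_toFinset.2 (le_refl r)),
      fun i hi hri => Lagrange.eval_basis_of_ne hi.symm (hfin.mem_toFinset.2 hri)⟩
  have hd : Tendsto d cofinite (𝓝 0) := by
    simpa using (h 0).summable.tendsto_cofinite_zero
  have hPx : Tendsto (fun i => P.eval (x i)) cofinite (𝓝 (P.eval 0)) :=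
    P.continuous.continuousAt.tendsto.comp (tendsto_zero_iff_norm_tendsto_zero.2 hlim)
  have he : Tendsto (fun i => d i * P.eval (x i)) cofinite (𝓝 0) := by
    simpa using hd.mul hPx
  obtain ⟨B, hB⟩ := he.norm.bddAbove_range_of_cofinite
  have hd₀ := eq_zero_of_forall_hasSum_mul_pow_of_norm_le (e := fun i => d i * P.eval (x i))
    (fun i => hB ⟨i, rfl⟩) hr' hr'r (fun i hi => ?_) fun k => ?_
  · simpa [hP₀] using hd₀
  · by_cases hri : r ≤ ‖x i‖
    · exact .inl (by simp [hP i hi hri])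
    · exact .inr (hsmall i (not_le.1 hri))
  · have hPXk := hasSum_mul_eval_of_forall_hasSum_mul_pow h (P * X ^ k)
    simpa only [eval_mul, eval_pow, eval_X, mul_assoc] using hPXk

end Ultrametric

theorem eq_zero_of_tsum_smul_pow_eq_zero_general
    {K : Type*} [NormedField K]
    (hna : IsNonarchimedean (fun x : K => ‖x‖))
    (lam : ℕ → K) (hinj : Function.Injective lam) (hne : ∀ i, lam i ≠ 0)
    (hlim : Tendsto (fun i => ‖lam i‖) atTop (nhds 0))
    (c : ℕ → K)
    (hsum : ∀ k : ℕ, 1 ≤ k → Summable (fun i => c i * lam i ^ k))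
    (hzero : ∀ k : ℕ, 1 ≤ k → ∑' i, c i * lam i ^ k = 0) :
    ∀ i, c i = 0 := by
  have := IsUltrametricDist.isUltrametricDist_of_isNonarchimedean_norm hna
  have hshift : ∀ k, HasSum (fun i => c i * lam i * lam i ^ k) 0 := fun k => by
    simpa only [mul_assoc, ← pow_succ'] using
      (hsum (k + 1) le_add_self).hasSum_iff.2 (hzero (k + 1) le_add_self)
  intro i
  have hcl := eq_zero_of_forall_hasSum_mul_pow hinj (Nat.cofinite_eq_atTop ▸ hlim) hshift (hne i)
  exact (mul_eq_zero.1 hcl).resolve_right (hne i)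

/-- **Vanishing of the coefficients of a null generalized Dirichlet expansion.**
Over a complete nonarchimedean normed field, if `λᵢ` are distinct nonzero elements with
`‖λᵢ‖ → 0`, `cᵢ` is bounded, and `Σᵢ cᵢ λᵢ^k = 0` (a summable family) for every `k ≥ 1`,
then every `cᵢ = 0`. -/
theorem eq_zero_of_tsum_smul_pow_eq_zero
    {K : Type*} [NormedField K] [CompleteSpace K]
    (hna : IsNonarchimedean (fun x : K => ‖x‖))
    (lam : ℕ → K) (hinj : Function.Injective lam) (hne : ∀ i, lam i ≠ 0)
    (hlim : Tendsto (fun i => ‖lam i‖) atTop (nhds 0))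
    (c : ℕ → K) (C : ℝ) (hbdd : ∀ i, ‖c i‖ ≤ C)
    (hsum : ∀ k : ℕ, 1 ≤ k → Summable (fun i => c i * lam i ^ k))
    (hzero : ∀ k : ℕ, 1 ≤ k → ∑' i, c i * lam i ^ k = 0) :
    ∀ i, c i = 0 :=
  eq_zero_of_tsum_smul_pow_eq_zero_general hna lam hinj hne hlim c hsum hzero
end

section
/- Assume γ ∈ K satisfies ‖γ‖ = p^{−1/(p−1)} and the family (γ^{p^i}/p^i)_{i ≥ 0} is summable in K with Σ_{i=0}^∞ γ^{p^i}/p^i = 0. Then for every m ≥ 0, the partial sum γ_m := Σ_{i=0}^m γ^{p^i}/p^i satisfies ‖γ_m‖ = p^{−(p^{m+1}/(p−1) − (m+1))}, i.e. ord_p(γ_m) = p^{m+1}/(p−1) − (m+1). -/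
/-!
Write `f i = γ^{pⁱ}/pⁱ`, so that `ord_p (f i) = pⁱ/(p-1) - i`. This exponent increases by
`pⁱ - 1` from `i` to `i + 1`, hence strictly from `i = 1` on. Since `Σ f = 0`, the partial sum
`γ_m` equals `-(f (m+1) + Σ_{i > m+1} f i)`, and by the ultrametric inequality the tail is strictly
smaller than `f (m+1)`, so `‖γ_m‖ = ‖f (m+1)‖`.
-/

open Finset

theorem IsUltrametricDist.norm_sum_range_eq_norm_of_tsum_eq_zero {E : Type*}
    [NormedAddCommGroup E] [IsUltrametricDist E] {f : ℕ → E} (hf : Summable f)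
    (h0 : ∑' i, f i = 0) {n : ℕ} {C : ℝ} (htail : ∀ i, n < i → ‖f i‖ ≤ C) (hC : C < ‖f n‖) :
    ‖∑ i ∈ range n, f i‖ = ‖f n‖ := by
  have hsplit : ∑ i ∈ range n, f i = -(f n + ∑' i, f (i + (n + 1))) := by
    have := hf.sum_add_tsum_nat_add (n + 1)
    rw [h0, sum_range_succ, add_assoc] at this
    exact eq_neg_of_add_eq_zero_left this
  have hrest : ‖∑' i, f (i + (n + 1))‖ < ‖f n‖ :=
    (norm_tsum_le_of_forall_le_of_nonneg ((norm_nonneg _).trans (htail (n + 1) n.lt_succ_self))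
      fun i ↦ htail _ (by omega)).trans_lt hC
  rw [hsplit, norm_neg, norm_add_eq_max_of_norm_ne_norm hrest.ne', max_eq_left hrest.le]

/-- `ord_p (γ^{pⁱ}/pⁱ)` when `ord_p γ = 1/(p-1)`. -/
noncomputable def artinHasseLogTermOrd (p i : ℕ) : ℝ :=
  (p : ℝ) ^ i / ((p : ℝ) - 1) - i

theorem artinHasseLogTermOrd_succ {p : ℕ} (hp : 1 < p) (i : ℕ) :
    artinHasseLogTermOrd p (i + 1) = artinHasseLogTermOrd p i + ((p : ℝ) ^ i - 1) := by
  have : (p : ℝ) - 1 ≠ 0 := sub_ne_zero.mpr (by exact_mod_cast hp.ne')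
  unfold artinHasseLogTermOrd
  field_simp
  push_cast
  ring

theorem strictMonoOn_artinHasseLogTermOrd {p : ℕ} (hp : 1 < p) :
    StrictMonoOn (artinHasseLogTermOrd p) (Set.Ici 1) :=
  strictMonoOn_of_lt_add_one Set.ordConnected_Ici fun i _ hi _ ↦ by
    rw [artinHasseLogTermOrd_succ hp, lt_add_iff_pos_right, sub_pos]
    exact one_lt_pow₀ (by exact_mod_cast hp) (Nat.one_le_iff_ne_zero.mp hi)

theorem norm_pow_pow_div_pow_eq_rpow {K : Type*} [NormedDivisionRing K] {p : ℕ} (hp : 0 < p)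
    (hpnorm : ‖(p : K)‖ = (p : ℝ)⁻¹) {γ : K} (hγ : ‖γ‖ = (p : ℝ) ^ (-(1 / ((p : ℝ) - 1))))
    (i : ℕ) :
    ‖γ ^ p ^ i / (p : K) ^ i‖ = (p : ℝ) ^ (-artinHasseLogTermOrd p i) := by
  rw [norm_div, norm_pow, norm_pow, hγ, hpnorm, ← Real.rpow_mul_natCast (by positivity),
    inv_pow, ← Real.rpow_natCast, ← Real.rpow_neg (by positivity),
    ← Real.rpow_sub (by exact_mod_cast hp)]
  unfold artinHasseLogTermOrd
  push_cast
  ring_nf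

theorem norm_partialSum_artinHasse_log_general
    {K : Type*} [NormedField K]
    (p : ℕ) (hp : p.Prime)
    (hna : IsNonarchimedean (fun x : K => ‖x‖))
    (hpnorm : ‖(p : K)‖ = (p : ℝ)⁻¹)
    (γ : K) (hγ : ‖γ‖ = (p : ℝ) ^ (-(1 / ((p : ℝ) - 1))))
    (hsum : Summable (fun i : ℕ => γ ^ p ^ i / (p : K) ^ i))
    (hzero : ∑' i : ℕ, γ ^ p ^ i / (p : K) ^ i = 0)
    (m : ℕ) :
    ‖∑ i ∈ Finset.range (m + 1), γ ^ p ^ i / (p : K) ^ i‖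
      = (p : ℝ) ^ (-(((p : ℝ) ^ (m + 1)) / ((p : ℝ) - 1) - (m + 1))) := by
  have := IsUltrametricDist.isUltrametricDist_of_isNonarchimedean_norm hna
  have hp1 : (1 : ℝ) < p := by exact_mod_cast hp.one_lt
  have hord := strictMonoOn_artinHasseLogTermOrd hp.one_lt
  have hnorm := norm_pow_pow_div_pow_eq_rpow hp.pos hpnorm hγ
  have hC : ‖γ ^ p ^ (m + 2) / (p : K) ^ (m + 2)‖ < ‖γ ^ p ^ (m + 1) / (p : K) ^ (m + 1)‖ := by
    rw [hnorm, hnorm, Real.rpow_lt_rpow_left_iff hp1, neg_lt_neg_iff]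
    exact hord (by simp) (by simp) (by omega)
  have htail : ∀ i, m + 1 < i →
      ‖γ ^ p ^ i / (p : K) ^ i‖ ≤ ‖γ ^ p ^ (m + 2) / (p : K) ^ (m + 2)‖ := fun i hi ↦ by
    rw [hnorm, hnorm, Real.rpow_le_rpow_left_iff hp1, neg_le_neg_iff]
    exact hord.monotoneOn (by simp) (by rw [Set.mem_Ici]; omega) (by omega)
  rw [IsUltrametricDist.norm_sum_range_eq_norm_of_tsum_eq_zero hsum hzero htail hC, hnorm,
    artinHasseLogTermOrd]
  push_cast
  rfl

/-- **Valuation of the partial sums of the Artin–Hasse logarithm at its root `γ`.**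
If `‖γ‖ = p^{-1/(p-1)}` and `Σ_{i≥0} γ^{pⁱ}/pⁱ = 0` (a summable family), then the partial
sum `γ_m = Σ_{i=0}^m γ^{pⁱ}/pⁱ` satisfies `ord_p(γ_m) = p^{m+1}/(p-1) - (m+1)`, i.e.
`‖γ_m‖ = p^{-(p^{m+1}/(p-1) - (m+1))}`. -/
theorem norm_partialSum_artinHasse_log
    {K : Type*} [NormedField K] [CompleteSpace K] [CharZero K]
    (p : ℕ) (hp : p.Prime)
    (hna : IsNonarchimedean (fun x : K => ‖x‖))
    (hpnorm : ‖(p : K)‖ = (p : ℝ)⁻¹)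
    (γ : K) (hγ : ‖γ‖ = (p : ℝ) ^ (-(1 / ((p : ℝ) - 1))))
    (hsum : Summable (fun i : ℕ => γ ^ p ^ i / (p : K) ^ i))
    (hzero : ∑' i : ℕ, γ ^ p ^ i / (p : K) ^ i = 0)
    (m : ℕ) :
    ‖∑ i ∈ Finset.range (m + 1), γ ^ p ^ i / (p : K) ^ i‖
      = (p : ℝ) ^ (-(((p : ℝ) ^ (m + 1)) / ((p : ℝ) - 1) - (m + 1))) :=
  norm_partialSum_artinHasse_log_general p hp hna hpnorm γ hγ hsum hzero m
end
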